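/- arXiv:1108.5832 — 6 statements merged into one kernel-verified Lean document; each statement's English description precedes it below -/
import Mathlib

section
/- If A ⊆ ℕ is infinite and r⁺(n,A) = #{(a,a') : a + a' = n, a ≤ a', a,a' ∈ A} is constant for all sufficiently large n, then a contradiction follows; i.e., r⁺(n,A) cannot be eventually constant for any infinite set A. -/
/-!
Dirac's generating-function argument. For `f(x) = ∑_{a ∈ A} x^a` and `R(x) = ∑ r⁺(n, A) x^n`,
splitting the ordered representations of `n` into those with `a < a'`, `a = a'`, `a > a'` gives
`2 R(x) = f(x)² + f(x²)` for `|x| < 1`; at `x = -√y` the square is nonnegative, so `f(y) ≤ 2 R(-√y)`.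
If `r⁺(·, A)` is eventually constant, `R` is a polynomial plus `c xᴺ / (1 - x)`, so `R` is
bounded on `(-1, 0]`; but `f(y) → ∞` as `y → 1⁻` because `A` is infinite.
-/

open Finset Filter Topology

def rplus (A : Set ℕ) [DecidablePred (· ∈ A)] (n : ℕ) : ℕ :=
  #{p ∈ antidiagonal n | p.1 ≤ p.2 ∧ p.1 ∈ A ∧ p.2 ∈ A}

theorem ncard_setOf_eq_rplus (A : Set ℕ) [DecidablePred (· ∈ A)] (n : ℕ) :
    {p : ℕ × ℕ | p.1 ∈ A ∧ p.2 ∈ A ∧ p.1 ≤ p.2 ∧ p.1 + p.2 = n}.ncard = rplus A n := by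
  rw [rplus, ← Set.ncard_coe_finset]
  congr 1
  ext p
  simp only [Set.mem_ofPred_eq, coe_filter, HasAntidiagonal.mem_antidiagonal]
  tauto

theorem sum_antidiagonal_add_sum_filter_fst_eq_snd {M : Type*} [AddCommMonoid M]
    (φ : ℕ × ℕ → M) (hφ : ∀ p, φ p.swap = φ p) (n : ℕ) :
    ∑ p ∈ antidiagonal n, φ p + ∑ p ∈ antidiagonal n with p.1 = p.2, φ p =
      2 • ∑ p ∈ antidiagonal n with p.1 ≤ p.2, φ p := by
  have hgt : ∑ p ∈ antidiagonal n with ¬p.1 ≤ p.2, φ p =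
      ∑ p ∈ antidiagonal n with p.1 < p.2, φ p := by
    refine sum_nbij' Prod.swap Prod.swap ?_ ?_ (fun _ _ => rfl) (fun _ _ => rfl)
      (fun p _ => (hφ p).symm) <;>
    · intro p hp
      simp only [mem_filter, HasAntidiagonal.mem_antidiagonal, Prod.fst_swap,
        Prod.snd_swap] at hp ⊢
      omega
  have hle : ∑ p ∈ antidiagonal n with p.1 < p.2, φ p +
      ∑ p ∈ antidiagonal n with p.1 = p.2, φ p = ∑ p ∈ antidiagonal n with p.1 ≤ p.2, φ p := by
    rw [← sum_union (disjoint_filter.2 fun p _ h => h.ne), ← filter_or]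
    simp only [le_iff_lt_or_eq]
  rw [← sum_filter_add_sum_filter_not _ (fun p : ℕ × ℕ => p.1 ≤ p.2), hgt, add_assoc, hle,
    two_nsmul]

theorem sum_antidiagonal_filter_fst_eq_snd_two_mul {M : Type*} [AddCommMonoid M] (φ : ℕ × ℕ → M)
    (a : ℕ) : ∑ p ∈ antidiagonal (2 * a) with p.1 = p.2, φ p = φ (a, a) := by
  rw [sum_eq_single_of_mem (a, a) (by simp; omega)]
  rintro p hp hne
  simp only [mem_filter, HasAntidiagonal.mem_antidiagonal] at hp
  exact absurd (Prod.ext (by omega) (by omega)) hne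

theorem sum_antidiagonal_filter_fst_eq_snd_of_notMem_range {M : Type*} [AddCommMonoid M]
    (φ : ℕ × ℕ → M) {n : ℕ} (hn : n ∉ Set.range (2 * ·)) :
    ∑ p ∈ antidiagonal n with p.1 = p.2, φ p = 0 := by
  refine sum_eq_zero fun p hp => absurd ⟨p.1, ?_⟩ hn
  simp only [mem_filter, HasAntidiagonal.mem_antidiagonal] at hp
  show 2 * p.1 = n
  omega

section

variable {𝕜 : Type*} [NormedField 𝕜]

theorem summable_norm_indicator_pow (A : Set ℕ) {x : 𝕜} (hx : ‖x‖ < 1) :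
    Summable fun n => ‖A.indicator (x ^ ·) n‖ :=
  (summable_geometric_of_lt_one (norm_nonneg x) hx).of_nonneg_of_le (fun _ => norm_nonneg _)
    fun n => (norm_indicator_le_norm_self _ n).trans (norm_pow x n).le

theorem hasSum_two_mul_rplus_mul_pow [CompleteSpace 𝕜] (A : Set ℕ) [DecidablePred (· ∈ A)]
    {x : 𝕜} (hx : ‖x‖ < 1) :
    HasSum (fun n => 2 * (rplus A n : 𝕜) * x ^ n)
      ((∑' n, A.indicator (x ^ ·) n) ^ 2 + ∑' n, A.indicator ((x ^ 2) ^ ·) n) := by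
  set g : ℕ → 𝕜 := A.indicator (x ^ ·)
  have hg := summable_norm_indicator_pow A hx
  have hsq : HasSum (fun n => ∑ p ∈ antidiagonal n, g p.1 * g p.2) ((∑' n, g n) ^ 2) := by
    rw [sq, tsum_mul_tsum_eq_tsum_sum_antidiagonal_of_summable_norm hg hg]
    exact (summable_norm_sum_mul_antidiagonal_of_summable_norm hg hg).of_norm.hasSum
  have hx2 : ‖x ^ 2‖ < 1 := by rw [norm_pow]; nlinarith [norm_nonneg x]
  have hdiag : HasSum (fun n => ∑ p ∈ antidiagonal n with p.1 = p.2, g p.1 * g p.2)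
      (∑' n, A.indicator ((x ^ 2) ^ ·) n) := by
    have hcomp : (fun n => ∑ p ∈ antidiagonal n with p.1 = p.2, g p.1 * g p.2) ∘ (2 * ·) =
        A.indicator ((x ^ 2) ^ ·) := by
      funext a
      simp only [Function.comp_apply, sum_antidiagonal_filter_fst_eq_snd_two_mul, g,
        Set.indicator_apply]
      split_ifs <;> ring
    refine ((mul_right_injective₀ two_ne_zero).hasSum_iff
      fun n hn => sum_antidiagonal_filter_fst_eq_snd_of_notMem_range _ hn).mp ?_
    rw [hcomp]
    exact (summable_norm_indicator_pow A hx2).of_norm.hasSum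
  convert hsq.add hdiag using 1
  funext n
  have hterm : ∀ p ∈ antidiagonal n,
      g p.1 * g p.2 = if p.1 ∈ A ∧ p.2 ∈ A then x ^ n else 0 := by
    intro p hp
    rw [HasAntidiagonal.mem_antidiagonal] at hp
    simp only [g, Set.indicator_apply, ← hp, pow_add]
    split_ifs <;> simp_all
  rw [sum_antidiagonal_add_sum_filter_fst_eq_snd _ (fun p => mul_comm _ _), nsmul_eq_mul,
    Nat.cast_two, mul_assoc, sum_congr rfl fun p hp => hterm p (mem_filter.1 hp).1, sum_ite,
    sum_const_zero, add_zero, sum_const, filter_filter, nsmul_eq_mul, rplus]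

end

theorem tendsto_tsum_indicator_pow_nhdsLT_one {A : Set ℕ} (hA : A.Infinite) :
    Tendsto (fun y : ℝ => ∑' n, A.indicator (y ^ ·) n) (𝓝[<] 1) atTop := by
  refine tendsto_atTop.2 fun B => ?_
  obtain ⟨F, hFA, hF⟩ := hA.exists_subset_card_eq (⌈B⌉₊ + 1)
  have hlim : Tendsto (fun y : ℝ => ∑ a ∈ F, y ^ a) (𝓝[<] 1) (𝓝 #F) := by
    have := ((continuous_finsetSum F fun a _ => continuous_pow (M := ℝ) a).tendsto 1).mono_left
      (nhdsWithin_le_nhds (s := Set.Iio 1))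
    simpa using this
  have hBF : B < #F := by rw [hF]; push_cast; linarith [Nat.le_ceil B]
  filter_upwards [hlim.eventually (lt_mem_nhds hBF), Ioo_mem_nhdsLT one_pos]
    with y hBy ⟨hy0, hy1⟩
  calc B ≤ ∑ a ∈ F, y ^ a := hBy.le
    _ = ∑ a ∈ F, A.indicator (y ^ ·) a :=
      sum_congr rfl fun a ha => (Set.indicator_of_mem (hFA ha) _).symm
    _ ≤ ∑' n, A.indicator (y ^ ·) n :=
      ((summable_geometric_of_lt_one hy0.le hy1).indicator A).sum_le_tsum F
        fun n _ => Set.indicator_nonneg (fun n _ => pow_nonneg hy0.le n) n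

theorem abs_tsum_mul_pow_le_of_eventually_eq {b : ℕ → ℝ} {c : ℝ} {N : ℕ}
    (hb : ∀ n ≥ N, b n = c) {x : ℝ} (hx₀ : -1 < x) (hx : x ≤ 0) :
    |∑' n, b n * x ^ n| ≤ ∑ n ∈ range N, |b n| + |c| := by
  have habs : |x| < 1 := abs_lt.2 ⟨hx₀, by linarith⟩
  have htail : HasSum (fun i => b (i + N) * x ^ (i + N)) (c * x ^ N * (1 - x)⁻¹) := by
    refine ((hasSum_geometric_of_abs_lt_one habs).mul_left (c * x ^ N)).congr_fun fun i => ?_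
    rw [hb (i + N) (Nat.le_add_left N i), pow_add]
    ring
  have hsum : Summable fun n => b n * x ^ n :=
    (summable_nat_add_iff (f := fun n => b n * x ^ n) N).1 htail.summable
  rw [← hsum.sum_add_tsum_nat_add N, htail.tsum_eq]
  have hhead : |∑ n ∈ range N, b n * x ^ n| ≤ ∑ n ∈ range N, |b n| := by
    refine (abs_sum_le_sum_abs _ _).trans (sum_le_sum fun n _ => ?_)
    rw [abs_mul, abs_pow]
    exact mul_le_of_le_one_right (abs_nonneg _) (pow_le_one₀ (abs_nonneg x) habs.le)
  have htail_le : |c * x ^ N * (1 - x)⁻¹| ≤ |c| := by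
    rw [abs_mul, abs_mul, abs_pow, abs_inv, abs_of_pos (by linarith : 0 < 1 - x), mul_assoc]
    exact mul_le_of_le_one_right (abs_nonneg c) (mul_le_one₀ (pow_le_one₀ (abs_nonneg x) habs.le)
      (inv_nonneg.2 (by linarith : (0 : ℝ) ≤ 1 - x)) (inv_le_one_of_one_le₀ (by linarith)))
  exact (abs_add_le _ _).trans (add_le_add hhead htail_le)

/-- Erdős–Turán / Dirac: for an infinite set `A ⊆ ℕ`, the representation
function `r⁺(n,A) = #{(a,a') ∈ A² : a + a' = n, a ≤ a'}` cannot be constant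
for all sufficiently large `n`. -/
theorem rplus_not_eventually_constant (A : Set ℕ) (hA : A.Infinite)
    (c N : ℕ)
    (h : ∀ n ≥ N,
      {p : ℕ × ℕ | p.1 ∈ A ∧ p.2 ∈ A ∧ p.1 ≤ p.2 ∧ p.1 + p.2 = n}.ncard = c) :
    False := by
  classical
  have hr : ∀ n ≥ N, 2 * (rplus A n : ℝ) = 2 * c := fun n hn => by
    rw [← ncard_setOf_eq_rplus, h n hn]
  set B := ∑ n ∈ range N, |2 * (rplus A n : ℝ)| + |2 * (c : ℝ)|
  obtain ⟨y, hBy, hy0, hy1⟩ := ((tendsto_tsum_indicator_pow_nhdsLT_one hA).eventually_gt_atTop B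
    |>.and (Ioo_mem_nhdsLT one_pos)).exists
  have hx₀ : -1 < -√y := by
    rw [neg_lt_neg_iff, Real.sqrt_lt' one_pos, one_pow]; exact hy1
  have hx : ‖-√y‖ < 1 :=
    (Real.norm_eq_abs _).trans_lt (abs_lt.2 ⟨hx₀, by linarith [Real.sqrt_nonneg y]⟩)
  have key := (hasSum_two_mul_rplus_mul_pow A hx).tsum_eq
  rw [neg_sq, Real.sq_sqrt hy0.le] at key
  have hbound := abs_tsum_mul_pow_le_of_eventually_eq hr hx₀ (neg_nonpos.2 (Real.sqrt_nonneg y))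
  rw [key] at hbound
  linarith [le_abs_self ((∑' n, A.indicator ((-√y) ^ ·) n) ^ 2 + ∑' n, A.indicator (y ^ ·) n),
    sq_nonneg (∑' n, A.indicator ((-√y) ^ ·) n)]
end

section
/- Let f ∈ ℂ[[x^Λ]] with f(0) ≠ 0, and define the logarithmic derivative x f'/f using the formal derivative x f' = Σ λ c_λ x^λ. Then f lies in the subring ℂ[[x]] of ordinary power series if and only if x f'/f lies in ℂ[[x]]. -/
noncomputable section

/-- The lattice Λ associated to `(b; θ₁,…,θₘ)`. -/
def lattice {m : ℕ} (b : ℕ) (θ : Fin m → ℝ) : Set ℝ :=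
  {x | ∃ F : MvPolynomial (Fin m) ℕ,
    x = (b : ℝ)⁻¹ * MvPolynomial.eval₂ (Nat.castRingHom ℝ) θ F}

/-- Multiplication (convolution) of fractional power series, encoded by their
coefficient functions `ℝ → ℂ`. -/
def fmul (f g : ℝ → ℂ) : ℝ → ℂ := fun lam => ∑ᶠ mu : ℝ, f mu * g (lam - mu)

/-- The unit element `1 = x⁰`. -/
def fone : ℝ → ℂ := fun lam => if lam = 0 then 1 else 0

/-- The derivative operator `f ↦ x f'`, termwise `Σ c_λ x^λ ↦ Σ λ c_λ x^λ`. -/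
def fderiv' (f : ℝ → ℂ) : ℝ → ℂ := fun lam => (lam : ℂ) * f lam

/-- A coefficient function lies in the subring `ℂ[[x]]` iff its support
consists of nonnegative integers. -/
def isPowerSeries (f : ℝ → ℂ) : Prop :=
  Function.support f ⊆ Set.range (Nat.cast : ℕ → ℝ)


/-! Supports in `Λ` are partially well-ordered and nonnegative, so coefficient functions supported
in `Λ` are Hahn series and `fmul` is their associative, commutative product.
If `u ∈ ℂ[[x]]` and `a` is the least non-integral exponent of `v`, every other contribution to
the coefficient of `x^a` in `u v` vanishes, so it equals `u(0) v(a)`.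
For `f ∈ ℂ[[x]]`, applying this to `f g = 1` gives `g ∈ ℂ[[x]]`, hence `x f' g ∈ ℂ[[x]]`.
Conversely, `h = x f' g` satisfies `h f = x f'` and `h(0) = 0`; if `h ∈ ℂ[[x]]` and `a` is the
least non-integral exponent of `f`, then `a f(a) = h(0) f(a) = 0`, impossible since `a ≠ 0`. -/

section Lattice

variable {m : ℕ} {b : ℕ} {θ : Fin m → ℝ}

theorem lattice_subset_image_closure :
    lattice b θ ⊆ (fun e => (b : ℝ)⁻¹ * e) ''
      AddSubmonoid.closure (Set.range fun d : Fin m →₀ ℕ => ∏ i, θ i ^ d i) := by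
  rintro _ ⟨F, rfl⟩
  refine ⟨_, ?_, rfl⟩
  rw [MvPolynomial.eval₂_eq']
  refine AddSubmonoid.sum_mem _ fun d _ => ?_
  simpa using AddSubmonoid.nsmul_mem _
    (AddSubmonoid.subset_closure (Set.mem_range_self (f := fun d : Fin m →₀ ℕ => ∏ i, θ i ^ d i) d))
    (F.coeff d)

-- Dickson's lemma makes the monomials `θ ^ d` partially well-ordered, and sums of nonnegative
-- elements of a partially well-ordered set stay partially well-ordered.
theorem isPWO_lattice (hθ : ∀ i, 1 ≤ θ i) : (lattice b θ).IsPWO := by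
  refine Set.IsPWO.mono ?_ lattice_subset_image_closure
  refine Set.IsPWO.image_of_monotone ?_ fun _ _ h => mul_le_mul_of_nonneg_left h (by positivity)
  refine Set.IsPWO.addSubmonoid_closure ?_ ?_
  · rintro _ ⟨d, rfl⟩
    exact Finset.prod_nonneg fun i _ => pow_nonneg (zero_le_one.trans (hθ i)) _
  · rw [← Set.image_univ]
    exact (Set.isPWO_of_wellQuasiOrderedLE _).image_of_monotone fun d e h =>
      Finset.prod_le_prod (fun i _ => pow_nonneg (zero_le_one.trans (hθ i)) _)
        fun i _ => pow_le_pow_right₀ (hθ i) (h i)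

theorem nonneg_of_mem_lattice (hθ : ∀ i, 0 ≤ θ i) {x : ℝ} (hx : x ∈ lattice b θ) : 0 ≤ x := by
  obtain ⟨e, he, rfl⟩ := lattice_subset_image_closure hx
  clear hx
  refine mul_nonneg (by positivity) ?_
  induction he using AddSubmonoid.closure_induction with
  | mem _ h => obtain ⟨d, rfl⟩ := h; exact Finset.prod_nonneg fun i _ => pow_nonneg (hθ i) _
  | zero => exact le_rfl
  | add _ _ _ _ h₁ h₂ => exact add_nonneg h₁ h₂

end Lattice

section Convolution

open Function

variable {u v w : ℝ → ℂ}

theorem fmul_coeff (x y : HahnSeries ℝ ℂ) : fmul x.coeff y.coeff = (x * y).coeff := by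
  classical
  ext a
  set A := Finset.antidiagonal x.isPWO_support y.isPWO_support a
  calc fmul x.coeff y.coeff a = ∑ μ ∈ A.image Prod.fst, x.coeff μ * y.coeff (a - μ) := by
        refine finsum_eq_sum_of_support_subset _ fun μ hμ => Finset.mem_image.2 ⟨(μ, a - μ), ?_, rfl⟩
        exact Finset.mem_antidiagonal.2
          ⟨left_ne_zero_of_mul hμ, right_ne_zero_of_mul hμ, add_sub_cancel _ _⟩
    _ = ∑ ij ∈ A, x.coeff ij.1 * y.coeff (a - ij.1) := by
        refine Finset.sum_image fun p hp q hq h => Prod.ext h ?_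
        have hp := (Finset.mem_antidiagonal.1 hp).2.2
        have hq := (Finset.mem_antidiagonal.1 hq).2.2
        linarith
    _ = ∑ ij ∈ A, x.coeff ij.1 * y.coeff ij.2 := by
        refine Finset.sum_congr rfl fun ij hij => ?_
        rw [← (Finset.mem_antidiagonal.1 hij).2.2, add_sub_cancel_left]
    _ = (x * y).coeff a := HahnSeries.coeff_mul.symm

theorem exists_hahnSeries_coeff_eq (hu : (support u).IsPWO) : ∃ x : HahnSeries ℝ ℂ, x.coeff = u :=
  ⟨⟨u, hu⟩, rfl⟩

theorem fmul_comm (hu : (support u).IsPWO) (hv : (support v).IsPWO) : fmul u v = fmul v u := by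
  obtain ⟨x, rfl⟩ := exists_hahnSeries_coeff_eq hu
  obtain ⟨y, rfl⟩ := exists_hahnSeries_coeff_eq hv
  rw [fmul_coeff, fmul_coeff, mul_comm]

theorem fmul_assoc (hu : (support u).IsPWO) (hv : (support v).IsPWO) (hw : (support w).IsPWO) :
    fmul (fmul u v) w = fmul u (fmul v w) := by
  obtain ⟨x, rfl⟩ := exists_hahnSeries_coeff_eq hu
  obtain ⟨y, rfl⟩ := exists_hahnSeries_coeff_eq hv
  obtain ⟨z, rfl⟩ := exists_hahnSeries_coeff_eq hw
  rw [fmul_coeff x, fmul_coeff, fmul_coeff y, fmul_coeff, mul_assoc]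

theorem fmul_fone (u : ℝ → ℂ) : fmul u fone = u := by
  ext a
  rw [fmul, finsum_eq_single _ a fun μ hμ => ?_, sub_self, fone, if_pos rfl, mul_one]
  rw [fone, if_neg (sub_ne_zero.2 hμ.symm), mul_zero]

theorem fmul_apply_zero (hu : support u ⊆ Set.Ici 0) (hv : support v ⊆ Set.Ici 0) :
    fmul u v 0 = u 0 * v 0 := by
  rw [fmul, finsum_eq_single _ 0 fun μ hμ => ?_, sub_zero]
  by_contra h
  have h₁ : 0 ≤ μ := hu (left_ne_zero_of_mul h)
  have h₂ : 0 ≤ 0 - μ := hv (right_ne_zero_of_mul h)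
  exact hμ (by linarith)

theorem support_fderiv'_subset (u : ℝ → ℂ) : support (fderiv' u) ⊆ support u :=
  support_mul_subset_right _ _

theorem isPowerSeries_fderiv' (hu : isPowerSeries u) : isPowerSeries (fderiv' u) :=
  (support_fderiv'_subset u).trans hu

theorem isPowerSeries_fmul (hu : isPowerSeries u) (hv : isPowerSeries v) :
    isPowerSeries (fmul u v) := by
  intro a ha
  obtain ⟨μ, hμ⟩ : ∃ μ, u μ * v (a - μ) ≠ 0 := by
    by_contra! h
    exact ha (finsum_eq_zero_of_forall_eq_zero h)
  obtain ⟨n, rfl⟩ := hu (left_ne_zero_of_mul hμ)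
  obtain ⟨k, hk⟩ := hv (right_ne_zero_of_mul hμ)
  exact ⟨n + k, by push_cast; linarith⟩

theorem ne_zero_of_notMem_range_natCast {a : ℝ} (ha : a ∉ Set.range (Nat.cast : ℕ → ℝ)) :
    a ≠ 0 :=
  fun h => ha ⟨0, Nat.cast_zero.trans h.symm⟩

theorem fmul_apply_of_isPowerSeries (hu : isPowerSeries u) {a : ℝ}
    (hv : ∀ n : ℕ, 0 < n → v (a - n) = 0) : fmul u v a = u 0 * v a := by
  rw [fmul, finsum_eq_single _ 0 fun μ hμ => ?_, sub_zero]
  by_cases hμu : u μ = 0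
  · rw [hμu, zero_mul]
  obtain ⟨n, rfl⟩ := hu hμu
  rw [hv n (Nat.pos_of_ne_zero (by rintro rfl; exact hμ Nat.cast_zero)), mul_zero]

theorem exists_nonintegral_fmul_apply_eq (hu : isPowerSeries u) (hv : (support v).IsPWO)
    (h : ¬ isPowerSeries v) :
    ∃ a ∉ Set.range (Nat.cast : ℕ → ℝ), v a ≠ 0 ∧ fmul u v a = u 0 * v a := by
  obtain ⟨a, ha⟩ := (hv.mono Set.sdiff_subset).exists_minimal (Set.sdiff_nonempty.2 h)
  refine ⟨a, ha.prop.2, ha.prop.1, fmul_apply_of_isPowerSeries hu fun n hn => ?_⟩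
  by_contra hva
  have hlt : a - n < a := sub_lt_self a (Nat.cast_pos.2 hn)
  refine hlt.not_ge (ha.le_of_le ⟨hva, fun ⟨k, hk⟩ => ha.prop.2 ⟨k + n, ?_⟩⟩ hlt.le)
  push_cast
  linarith

theorem isPowerSeries_of_fmul_eq_fone (hu : isPowerSeries u) (hu0 : u 0 ≠ 0)
    (hv : (support v).IsPWO) (huv : fmul u v = fone) : isPowerSeries v := by
  by_contra h
  obtain ⟨a, ha, hva, hav⟩ := exists_nonintegral_fmul_apply_eq hu hv h
  rw [huv, fone, if_neg (ne_zero_of_notMem_range_natCast ha)] at hav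
  exact mul_ne_zero hu0 hva hav.symm

end Convolution

theorem powerSeries_iff_logDeriv_general {m : ℕ} (b : ℕ)
    (θ : Fin m → ℝ) (hθ : ∀ i, 1 < θ i) (f g : ℝ → ℂ)
    (hf : Function.support f ⊆ lattice b θ) (hf0 : f 0 ≠ 0)
    (hg : Function.support g ⊆ lattice b θ)
    (hfg : fmul f g = fone) :
    isPowerSeries f ↔ isPowerSeries (fmul (fderiv' f) g) := by
  have hΛ : (lattice b θ).IsPWO := isPWO_lattice fun i => (hθ i).le
  have hΛ₀ : lattice b θ ⊆ Set.Ici 0 :=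
    fun _ => nonneg_of_mem_lattice fun i => zero_le_one.trans (hθ i).le
  have hf' := hΛ.mono hf
  have hg' := hΛ.mono hg
  have hδf := support_fderiv'_subset f
  refine ⟨fun hPf => isPowerSeries_fmul (isPowerSeries_fderiv' hPf)
    (isPowerSeries_of_fmul_eq_fone hPf hf0 hg' hfg), fun hPh => ?_⟩
  by_contra hPf
  obtain ⟨a, ha, hfa, hka⟩ := exists_nonintegral_fmul_apply_eq hPh hf' hPf
  have hcancel : fmul (fmul (fderiv' f) g) f = fderiv' f := by
    rw [fmul_assoc (hf'.mono hδf) hg' hf', fmul_comm hg' hf', hfg, fmul_fone]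
  have hh0 : fmul (fderiv' f) g 0 = 0 := by
    rw [fmul_apply_zero ((hδf.trans hf).trans hΛ₀) (hg.trans hΛ₀), fderiv', Complex.ofReal_zero,
      zero_mul, zero_mul]
  rw [hcancel, hh0, zero_mul, fderiv'] at hka
  exact mul_ne_zero (Complex.ofReal_ne_zero.2 (ne_zero_of_notMem_range_natCast ha)) hfa hka

/-- Let `f ∈ ℂ[[x^Λ]]` with `f(0) ≠ 0`, and let `g = f⁻¹` in `ℂ[[x^Λ]]`.
Then `f ∈ ℂ[[x]]` if and only if the logarithmic derivative
`x f'/f = (x f')·f⁻¹` lies in `ℂ[[x]]`. -/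
theorem powerSeries_iff_logDeriv {m : ℕ} (b : ℕ) (hb : 0 < b)
    (θ : Fin m → ℝ) (hθ : ∀ i, 1 < θ i) (f g : ℝ → ℂ)
    (hf : Function.support f ⊆ lattice b θ) (hf0 : f 0 ≠ 0)
    (hg : Function.support g ⊆ lattice b θ)
    (hfg : fmul f g = fone) :
    isPowerSeries f ↔ isPowerSeries (fmul (fderiv' f) g) :=
  powerSeries_iff_logDeriv_general b θ hθ f g hf hf0 hg hfg
end
end

section
/- Modified Möbius inversion: Let b ≥ 2 and 𝔻 = ℚ_b' − ℕ' be the set of positive rationals of the form n/b^t (n ∈ ℕ', t ≥ 0) that are not in ℕ'. Let (A_n)_{n∈𝔻} be complex numbers and define B_m = Σ_{n∈𝔻, n|m} A_n (a finite sum) for m ∈ 𝔻, where n|m means m/n ∈ ℕ. Then A_n = Σ_{m∈𝔻, m|n} μ(n/m) B_m for all n ∈ 𝔻. -/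
noncomputable section

/-- `ℕ' = { N ∈ ℕ : every prime dividing N divides B }` (with `B = b₀b₁⋯bₘ`). -/
def Nprime (B : ℕ) : Set ℕ :=
  {N | 0 < N ∧ ∀ p : ℕ, p.Prime → p ∣ N → p ∣ B}

/-- `ℚ_b' = { n/b^t : n ∈ ℕ', t ≥ 0 }`. -/
def Qbprime (b B : ℕ) : Set ℚ :=
  {q | ∃ n ∈ Nprime B, ∃ t : ℕ, q = (n : ℚ) / (b : ℚ) ^ t}

/-- `𝔻 = ℚ_b' − ℕ'`: elements of `ℚ_b'` that are not (the image of) an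
element of `ℕ'`. -/
def Dset (b B : ℕ) : Set ℚ :=
  {q ∈ Qbprime b B | ¬ ∃ n ∈ Nprime B, q = (n : ℚ)}

/-- Divisibility among positive rationals: `a ∣ c` iff `c/a ∈ ℕ`. -/
def qdvd (a c : ℚ) : Prop := ∃ k : ℕ, 0 < k ∧ c = a * (k : ℚ)

/-!
Write the divisors of `n ∈ 𝔻` as `m = n / k` with `k ∈ ℕ`, and let `g = quotIndicator 𝔻 A n`,
i.e. `g k = A (n / k)` when `n / k ∈ 𝔻` and `g k = 0` otherwise; `g` has finite support by the
finiteness hypothesis. The right-hand side becomes `∑ₖ μ(k) ∑ⱼ g(kj)`, which is `g 1 = A n` by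
Möbius inversion over multiples. The constraint `m ∈ 𝔻` in the outer sum is harmless because `𝔻`
is convex for divisibility: if `l ∣ m ∣ n` with `l, n ∈ 𝔻` then `m ∈ 𝔻`
(`mul_mem_Dset_of_mul_mul_mem`), so a term with `m ∉ 𝔻` has an empty inner sum.
-/

open Function
open scoped ArithmeticFunction.Moebius

theorem sum_divisors_moebius (N : ℕ) : ∑ d ∈ N.divisors, μ d = if N = 1 then 1 else 0 := by
  rw [← ArithmeticFunction.coe_mul_zeta_apply, ArithmeticFunction.moebius_mul_coe_zeta,
    ArithmeticFunction.one_apply]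

theorem finsum_moebius_smul_finsum_mul {R : Type*} [AddCommGroup R] {f : ℕ → R}
    (hf : (support f).Finite) (hf0 : f 0 = 0) :
    ∑ᶠ k, μ k • ∑ᶠ j, f (k * j) = f 1 := by
  classical
  set s := hf.toFinset
  have hs : ∀ N ∈ s, N ≠ 0 := by
    rintro N hN rfl
    exact (hf.mem_toFinset.mp hN) hf0
  have multiples : ∀ k, μ k • ∑ᶠ j, f (k * j) = ∑ N ∈ s, if k ∣ N then μ k • f N else 0 := by
    intro k
    rcases k.eq_zero_or_pos with rfl | hk
    · simp
    rw [← finsum_mem_range (f := f) (mul_right_injective₀ hk.ne'), finsum_mem_def,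
      finsum_eq_sum_of_support_subset _ (s := s), Finset.smul_sum]
    · refine Finset.sum_congr rfl fun N _ => ?_
      simp [Set.indicator_apply, smul_ite, eq_comm, Dvd.dvd]
    · intro N hN
      exact hf.mem_toFinset.mpr (Set.indicator_apply_ne_zero.mp hN).2
  have divisors : ∀ N ∈ s, ∑ᶠ k, (if k ∣ N then μ k • f N else 0) = if N = 1 then f N else 0 := by
    intro N hN
    rw [finsum_eq_sum_of_support_subset _ (s := N.divisors)]
    · rw [Finset.sum_congr rfl fun k hk => if_pos (Nat.dvd_of_mem_divisors hk), ← Finset.sum_smul,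
        sum_divisors_moebius]
      split_ifs <;> simp
    · intro k hk
      rw [Finset.mem_coe, Nat.mem_divisors]
      exact ⟨of_not_not fun h => hk (if_neg h), hs N hN⟩
  rw [finsum_congr multiples, finsum_sum_comm, Finset.sum_congr rfl divisors, Finset.sum_ite_eq']
  · split_ifs with h
    · rfl
    · simpa [s, eq_comm] using h
  · intro N hN
    exact (Set.finite_Iic N).subset fun k hk =>
      Nat.le_of_dvd (Nat.pos_of_ne_zero (hs N hN)) (of_not_not fun h => hk (if_neg h))

theorem div_natCast_injective {q : ℚ} (hq : q ≠ 0) : Injective fun k : ℕ => q / k := by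
  intro a c h
  simpa [div_eq_mul_inv, hq] using h

def quotIndicator {M : Type*} [Zero M] (S : Set ℚ) (F : ℚ → M) (q : ℚ) : ℕ → M :=
  {k : ℕ | 0 < k ∧ q / k ∈ S}.indicator fun k => F (q / k)

section quotIndicator

variable {M : Type*} [Zero M] {S : Set ℚ} {F : ℚ → M} {q : ℚ}

theorem quotIndicator_zero : quotIndicator S F q 0 = 0 :=
  Set.indicator_of_notMem (by simp) _

theorem quotIndicator_one (hq : q ∈ S) : quotIndicator S F q 1 = F q := by
  simp [quotIndicator, hq]

theorem quotIndicator_div {k : ℕ} (hk : 0 < k) (j : ℕ) :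
    quotIndicator S F (q / k) j = quotIndicator S F q (k * j) := by
  rw [quotIndicator, quotIndicator, ← Set.indicator_comp_right (k * ·)]
  congr 1
  · ext j
    simp [div_div, hk]
  · ext j
    simp [div_div]

theorem finite_support_quotIndicator (hq : q ≠ 0)
    (hfin : {l | l ∈ S ∧ qdvd l q ∧ F l ≠ 0}.Finite) : (support (quotIndicator S F q)).Finite := by
  refine (hfin.preimage (div_natCast_injective hq).injOn).subset fun k hk => ?_
  obtain ⟨⟨hk, hkS⟩, hF⟩ := Set.indicator_apply_ne_zero.mp hk
  have hk' : (k : ℚ) ≠ 0 := by positivity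
  exact ⟨hkS, ⟨k, hk, by field_simp⟩, hF⟩

end quotIndicator

theorem finsum_mem_qdvd_eq_finsum_quotIndicator {M : Type*} [AddCommMonoid M] {q : ℚ}
    (hq : q ≠ 0) (S : Set ℚ) (F : ℚ → M) :
    ∑ᶠ m ∈ {m | m ∈ S ∧ qdvd m q}, F m = ∑ᶠ k, quotIndicator S F q k := by
  have himage : {m | m ∈ S ∧ qdvd m q} = (fun k : ℕ => q / k) '' {k | 0 < k ∧ q / k ∈ S} := by
    ext m
    constructor
    · rintro ⟨hm, k, hk, rfl⟩
      have hk' : (k : ℚ) ≠ 0 := by positivity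
      refine ⟨k, ⟨hk, ?_⟩, mul_div_cancel_right₀ m hk'⟩
      rwa [mul_div_cancel_right₀ m hk']
    · rintro ⟨k, ⟨hk, hS⟩, rfl⟩
      have hk' : (k : ℚ) ≠ 0 := by positivity
      exact ⟨hS, k, hk, by field_simp⟩
  rw [himage, finsum_mem_image (div_natCast_injective hq).injOn, finsum_mem_def]
  rfl

theorem mem_Nprime_of_dvd {B M N : ℕ} (hN : N ∈ Nprime B) (hMN : M ∣ N) : M ∈ Nprime B :=
  ⟨Nat.pos_of_dvd_of_pos hMN hN.1, fun p hp hpM => hN.2 p hp (hpM.trans hMN)⟩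

theorem mul_mem_Nprime {B M N : ℕ} (hM : M ∈ Nprime B) (hN : N ∈ Nprime B) :
    M * N ∈ Nprime B :=
  ⟨Nat.mul_pos hM.1 hN.1, fun p hp hpMN =>
    (hp.dvd_mul.mp hpMN).elim (hM.2 p hp) (hN.2 p hp)⟩

theorem pow_mem_Nprime {b B : ℕ} (hb : b ≠ 0) (hbB : b ∣ B) (t : ℕ) : b ^ t ∈ Nprime B :=
  ⟨by positivity, fun p hp hpb => (hp.dvd_of_dvd_pow hpb).trans hbB⟩

theorem pos_of_mem_Qbprime {b B : ℕ} (hb : b ≠ 0) {q : ℚ} (hq : q ∈ Qbprime b B) : 0 < q := by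
  obtain ⟨N, hN, t, rfl⟩ := hq
  have := hN.1
  positivity

theorem mem_Nprime_of_natCast_mem_Qbprime {b B N : ℕ} (hb : b ≠ 0)
    (hN : (N : ℚ) ∈ Qbprime b B) : N ∈ Nprime B := by
  obtain ⟨L, hL, t, hNL⟩ := hN
  have : N * b ^ t = L := by
    rw [eq_div_iff (by positivity)] at hNL
    exact_mod_cast hNL
  exact mem_Nprime_of_dvd hL (Dvd.intro _ this)

theorem mul_mem_Qbprime_of_mul_mul_mem {b B : ℕ} (hb : b ≠ 0) (hbB : b ∣ B) {q : ℚ} {j k : ℕ}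
    (hq : q ∈ Qbprime b B) (hqjk : q * j * k ∈ Qbprime b B) : q * j ∈ Qbprime b B := by
  obtain ⟨L, hL, t, rfl⟩ := hq
  obtain ⟨N, hN, s, hNs⟩ := hqjk
  have hcross : L * j * (k * b ^ s) = N * b ^ t := by
    rw [← mul_assoc, mul_comm N]
    field_simp at hNs
    exact_mod_cast hNs
  refine ⟨L * j, ?_, t, by push_cast; ring⟩
  exact mem_Nprime_of_dvd (mul_mem_Nprime hN (pow_mem_Nprime hb hbB t)) (Dvd.intro _ hcross)

theorem mul_mem_Dset_of_mul_mul_mem {b B : ℕ} (hb : b ≠ 0) (hbB : b ∣ B) {q : ℚ} {j k : ℕ}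
    (hq : q ∈ Qbprime b B) (hqjk : q * j * k ∈ Dset b B) : q * j ∈ Dset b B := by
  refine ⟨mul_mem_Qbprime_of_mul_mul_mem hb hbB hq hqjk.1, ?_⟩
  rintro ⟨M, -, hM⟩
  have hMk : q * j * k = ((M * k : ℕ) : ℚ) := by rw [hM, Nat.cast_mul]
  exact hqjk.2 ⟨M * k, mem_Nprime_of_natCast_mem_Qbprime hb (hMk ▸ hqjk.1), hMk⟩

theorem quotIndicator_Dset_mul_eq_zero {M : Type*} [Zero M] {b B : ℕ} (hb : b ≠ 0) (hbB : b ∣ B)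
    (F : ℚ → M) {n : ℚ} (hn : n ∈ Dset b B) {k : ℕ} (hk : 0 < k) (hnk : n / k ∉ Dset b B)
    (j : ℕ) :
    quotIndicator (Dset b B) F n (k * j) = 0 := by
  refine Set.indicator_of_notMem (fun hkj => hnk ?_) _
  obtain ⟨hkj, hD⟩ := hkj
  have hj : (j : ℚ) ≠ 0 := by exact_mod_cast right_ne_zero_of_mul hkj.ne'
  have hk' : (k : ℚ) ≠ 0 := by positivity
  have hmid : n / (k * j : ℕ) * j = n / k := by push_cast; field_simp
  have htop : n / k * k = n := by field_simp
  rw [← hmid]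
  exact mul_mem_Dset_of_mul_mul_mem hb hbB hD.1 (by rwa [hmid, htop])

/-- Modified Möbius inversion on `𝔻 = ℚ_b' − ℕ'`:  if
`B_m = Σ_{n∈𝔻, n|m} A_n` (a finite sum) for `m ∈ 𝔻`, then
`A_n = Σ_{m∈𝔻, m|n} μ(n/m) B_m` for all `n ∈ 𝔻`. -/
theorem modified_moebius_inversion (b B : ℕ) (hb : 2 ≤ b) (hbB : b ∣ B)
    (A : ℚ → ℂ)
    (hfin : ∀ m ∈ Dset b B, {n | n ∈ Dset b B ∧ qdvd n m ∧ A n ≠ 0}.Finite) :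
    ∀ n ∈ Dset b B,
      A n = ∑ᶠ m ∈ {m | m ∈ Dset b B ∧ qdvd m n},
        ((ArithmeticFunction.moebius ((n / m).num.toNat) : ℤ) : ℂ) *
          (∑ᶠ l ∈ {l | l ∈ Dset b B ∧ qdvd l m}, A l) := by
  intro n hn
  have hb0 : b ≠ 0 := by omega
  have hn0 : n ≠ 0 := (pos_of_mem_Qbprime hb0 hn.1).ne'
  set g := quotIndicator (Dset b B) A n
  have hterm : ∀ k, μ k • ∑ᶠ j, g (k * j) = quotIndicator (Dset b B) (fun m =>
      ((μ ((n / m).num.toNat) : ℤ) : ℂ) * ∑ᶠ l ∈ {l | l ∈ Dset b B ∧ qdvd l m}, A l) n k := by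
    intro k
    rcases k.eq_zero_or_pos with rfl | hk
    · simp [quotIndicator_zero]
    by_cases hnk : n / k ∈ Dset b B
    · have hk_mem : k ∈ {k : ℕ | 0 < k ∧ n / k ∈ Dset b B} := ⟨hk, hnk⟩
      rw [quotIndicator, Set.indicator_of_mem hk_mem, div_div_cancel₀ hn0,
        finsum_mem_qdvd_eq_finsum_quotIndicator (by positivity)]
      simp [g, quotIndicator_div hk, zsmul_eq_mul]
    · rw [quotIndicator, Set.indicator_of_notMem (fun hk' => hnk hk'.2),
        finsum_eq_zero_of_forall_eq_zero (quotIndicator_Dset_mul_eq_zero hb0 hbB A hn hk hnk),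
        smul_zero]
  calc A n = g 1 := (quotIndicator_one hn).symm
    _ = ∑ᶠ k, μ k • ∑ᶠ j, g (k * j) :=
      (finsum_moebius_smul_finsum_mul (finite_support_quotIndicator hn0 (hfin n hn))
        quotIndicator_zero).symm
    _ = _ := (finsum_congr hterm).trans (finsum_mem_qdvd_eq_finsum_quotIndicator hn0 _ _).symm
end
end

section
/- For positive integers a, d, let ⟨a|d⟩ = ∏_{p | gcd(a,d)} p^{ord_p(a)}. Then the cyclotomic polynomial satisfies Φ_d(x^a) = ∏_{f : d·⟨a|d⟩ ∣ f ∣ a·d} Φ_f(x), where Φ_n(x) = ∏_{u∈(ℤ/nℤ)^*} (1 − e^{2πiu/n} x). -/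
/-!
Over `ℂ`, `Φ_n` is the reversal of the monic cyclotomic polynomial, and reversal commutes with
products and with `x ↦ x^a`, so it suffices to prove the identity for monic cyclotomic
polynomials. Both sides then are monic divisors of the separable polynomial `x^{ad} - 1`, so it
suffices to compare roots: `ω` is a root of the left side iff `ω^a` is a primitive `d`-th root
of unity, i.e. iff the order `f` of `ω` satisfies `f = d · gcd(f, a)`; comparing `p`-adic
valuations, this holds exactly when `f ∣ ad` and `d⟨a|d⟩ ∣ f`.
-/

noncomputable section

open Polynomial

/-- The cyclotomic polynomial of order `n`, normalized so that `Φ_n(0) = 1`: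
`Φ_n(x) = ∏_{ζ primitive n-th root of unity} (1 − ζx)`. -/
def Phi (n : ℕ) : Polynomial ℂ :=
  ∏ ζ ∈ primitiveRoots n ℂ, (1 - Polynomial.C ζ * Polynomial.X)

/-- `⟨a|d⟩ = ∏_{p ∣ gcd(a,d)} p^{ord_p(a)}`. -/
def bracket (a d : ℕ) : ℕ :=
  ∏ p ∈ (Nat.gcd a d).primeFactors, p ^ (a.factorization p)

lemma factorization_bracket (a : ℕ) {d : ℕ} (hd : d ≠ 0) (p : ℕ) :
    (bracket a d).factorization p = if p ∣ d then a.factorization p else 0 := by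
  have hprime (q) (hq : q ∈ (a.gcd d).primeFactors) : q.Prime := Nat.prime_of_mem_primeFactors hq
  rw [bracket, Nat.factorization_prod fun q hq => pow_ne_zero _ (hprime q hq).ne_zero,
    Finsupp.finsetSum_apply,
    Finset.sum_congr rfl (g := fun q => if q = p then a.factorization q else 0) fun q hq => by
      rw [(hprime q hq).factorization_pow, Finsupp.single_apply],
    Finset.sum_ite_eq']
  simp only [Nat.mem_primeFactors_of_ne_zero (Nat.gcd_ne_zero_right hd), Nat.dvd_gcd_iff]
  split_ifs with hpad hpd
  · rfl
  · exact absurd hpad.2.2 hpd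
  · rw [eq_comm, Nat.factorization_eq_zero_iff]
    tauto
  · rfl

lemma mul_bracket_dvd_iff_eq_mul_gcd {a d f : ℕ} (ha : a ≠ 0) (hd : d ≠ 0)
    (hf : f ∣ a * d) :
    d * bracket a d ∣ f ↔ f = d * f.gcd a := by
  have had : a * d ≠ 0 := mul_ne_zero ha hd
  have hf0 : f ≠ 0 := ne_zero_of_dvd_ne_zero had hf
  have hB : bracket a d ≠ 0 := Finset.prod_ne_zero_iff.2 fun p hp =>
    pow_ne_zero _ (Nat.prime_of_mem_primeFactors hp).ne_zero
  have hg : f.gcd a ≠ 0 := Nat.gcd_ne_zero_right ha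
  have hfle := (Nat.factorization_le_iff_dvd hf0 had).2 hf
  rw [← Nat.factorization_le_iff_dvd (mul_ne_zero hd hB) hf0,
    ← Nat.factorization_inj.eq_iff hf0 (mul_ne_zero hd hg), Finsupp.le_def, Finsupp.ext_iff]
  refine forall_congr' fun p => ?_
  have hφ := hfle p
  simp only [Nat.factorization_mul ha hd, Nat.factorization_mul hd hB, Nat.factorization_mul hd hg,
    Nat.factorization_gcd hf0 ha, factorization_bracket a hd, Finsupp.add_apply,
    Finsupp.inf_apply] at hφ ⊢
  -- for the valuations `φ, α, δ` of `f, a, d` at `p`, with `φ ≤ α + δ`: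
  -- `φ = δ + min φ α ↔ δ + (if 0 < δ then α else 0) ≤ φ`
  by_cases hp : p.Prime
  · have hδ := hp.dvd_iff_one_le_factorization hd (n := d)
    split_ifs <;> omega
  · simp [Nat.factorization_eq_zero_of_not_prime _ hp]

lemma isPrimitiveRoot_pow_iff_orderOf_eq {M : Type*} [CommMonoid M] {ω : M} {a d : ℕ}
    (ha : a ≠ 0) :
    IsPrimitiveRoot (ω ^ a) d ↔ orderOf ω = d * (orderOf ω).gcd a := by
  rw [IsPrimitiveRoot.iff_orderOf, orderOf_pow' ω ha]
  constructor
  · rintro rfl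
    exact (Nat.div_mul_cancel (Nat.gcd_dvd_left _ _)).symm
  · exact Nat.div_eq_of_eq_mul_left (Nat.gcd_pos_of_pos_right _ (Nat.pos_of_ne_zero ha))

lemma mem_filter_divisors_iff {a d f : ℕ} (ha : a ≠ 0) (hd : d ≠ 0) :
    f ∈ (a * d).divisors.filter (fun f => d * bracket a d ∣ f) ↔ f = d * f.gcd a := by
  rw [Finset.mem_filter, Nat.mem_divisors]
  constructor
  · rintro ⟨⟨hf, -⟩, hdvd⟩
    exact (mul_bracket_dvd_iff_eq_mul_gcd ha hd hf).1 hdvd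
  · intro h
    have hf : f ∣ a * d := by
      rw [h, mul_comm a d]
      exact mul_dvd_mul_left d (Nat.gcd_dvd_right f a)
    exact ⟨⟨hf, mul_ne_zero ha hd⟩, (mul_bracket_dvd_iff_eq_mul_gcd ha hd hf).2 h⟩

lemma Polynomial.Monic.eq_of_separable_of_isRoot_iff {K : Type*} [Field K] [IsAlgClosed K]
    {P Q : K[X]} (hP : P.Monic) (hQ : Q.Monic) (hPs : P.Separable) (hQs : Q.Separable)
    (h : ∀ x, P.IsRoot x ↔ Q.IsRoot x) : P = Q := by
  have hroots : P.roots = Q.roots := (Multiset.Nodup.ext (nodup_roots hPs) (nodup_roots hQs)).2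
    fun x => by rw [mem_roots hP.ne_zero, mem_roots hQ.ne_zero, h]
  rw [(IsAlgClosed.splits P).eq_prod_roots_of_monic hP,
    (IsAlgClosed.splits Q).eq_prod_roots_of_monic hQ, hroots]

lemma cyclotomic_comp_X_pow {K : Type*} [Field K] [IsAlgClosed K] [CharZero K] {a d : ℕ}
    (ha : a ≠ 0) (hd : d ≠ 0) :
    (cyclotomic d K).comp (X ^ a) =
      ∏ f ∈ (a * d).divisors.filter (fun f => d * bracket a d ∣ f), cyclotomic f K := by
  have had : a * d ≠ 0 := mul_ne_zero ha hd
  have hsep : (X ^ (a * d) - 1 : K[X]).Separable := by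
    simpa using separable_X_pow_sub_C (1 : K) (Nat.cast_ne_zero.2 had) one_ne_zero
  apply Monic.eq_of_separable_of_isRoot_iff
  · exact (cyclotomic.monic d K).comp (monic_X_pow a) (by simpa using ha)
  · exact monic_prod_of_monic _ _ fun f _ => cyclotomic.monic f K
  · refine hsep.of_dvd ?_
    simpa [← expand_eq_comp_X_pow, pow_mul] using
      map_dvd (expand K a) (cyclotomic.dvd_X_pow_sub_one d K)
  · refine hsep.of_dvd ?_
    rw [← prod_cyclotomic_eq_X_pow_sub_one (Nat.pos_of_ne_zero had) K]
    exact Finset.prod_dvd_prod_of_subset _ _ _ (Finset.filter_subset _ _)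
  · intro ω
    rw [IsRoot.def, eval_comp, eval_pow, eval_X, ← IsRoot.def,
      isRoot_cyclotomic_iff_charZero (Nat.pos_of_ne_zero hd),
      isPrimitiveRoot_pow_iff_orderOf_eq ha,
      ← mem_filter_divisors_iff ha hd, IsRoot.def, eval_prod, Finset.prod_eq_zero_iff]
    constructor
    · intro hω
      exact ⟨_, hω, ((isRoot_cyclotomic_iff_charZero (Nat.pos_of_mem_divisors
        (Finset.mem_filter.1 hω).1)).2 (IsPrimitiveRoot.orderOf ω))⟩
    · rintro ⟨f, hf, hω⟩
      rwa [((isRoot_cyclotomic_iff_charZero (Nat.pos_of_mem_divisors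
        (Finset.mem_filter.1 hf).1)).1 hω).eq_orderOf] at hf

lemma Polynomial.reverse_prod {R ι : Type*} [CommSemiring R] [NoZeroDivisors R] (s : Finset ι)
    (f : ι → R[X]) : (∏ i ∈ s, f i).reverse = ∏ i ∈ s, (f i).reverse := by
  induction s using Finset.cons_induction with
  | empty => simpa using reverse_C (1 : R)
  | cons i s hi ih => rw [Finset.prod_cons, Finset.prod_cons, reverse_mul_of_domain, ih]

lemma Polynomial.reverse_X_pow_sub_C {R : Type*} [CommRing R] [Nontrivial R] (n : ℕ) (c : R) :
    (X ^ n - C c).reverse = 1 - C c * X ^ n := by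
  rw [reverse, natDegree_X_pow_sub_C, reflect_sub, reflect_monomial, reflect_C, revAt_le le_rfl,
    Nat.sub_self, pow_zero]

lemma Phi_comp_X_pow_eq_reverse {d : ℕ} (hd : d ≠ 0) (a : ℕ) :
    (Phi d).comp (X ^ a) = ((cyclotomic d ℂ).comp (X ^ a)).reverse := by
  rw [cyclotomic_eq_prod_X_sub_primitiveRoots (Complex.isPrimitiveRoot_exp d hd), Phi,
    ← expand_eq_comp_X_pow, ← expand_eq_comp_X_pow, map_prod, map_prod, reverse_prod]
  refine Finset.prod_congr rfl fun ζ _ => ?_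
  simp [reverse_X_pow_sub_C]

lemma Phi_eq_reverse_cyclotomic {n : ℕ} (hn : n ≠ 0) : Phi n = (cyclotomic n ℂ).reverse := by
  simpa using Phi_comp_X_pow_eq_reverse hn 1

/-- `Φ_d(x^a) = ∏_{f : d⟨a|d⟩ ∣ f ∣ ad} Φ_f(x)`. -/
theorem Phi_comp_X_pow (a d : ℕ) (ha : 0 < a) (hd : 0 < d) :
    (Phi d).comp (Polynomial.X ^ a) =
      ∏ f ∈ (a * d).divisors.filter (fun f => d * bracket a d ∣ f), Phi f := by
  rw [Phi_comp_X_pow_eq_reverse hd.ne', cyclotomic_comp_X_pow ha.ne' hd.ne', reverse_prod]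
  refine Finset.prod_congr rfl fun f hf => (Phi_eq_reverse_cyclotomic ?_).symm
  exact (Nat.pos_of_mem_divisors (Finset.mem_filter.1 hf).1).ne'
end
end

section
/- Let a₀,…,a_t be nonnegative integers with t ≥ 1, a₀ > 0, a_t > 0, and A = a₀+⋯+a_t. Suppose H₀,…,H_r ∈ ℚ and the polynomial identity (a₀ + a₁z + ⋯ + a_t z^t)·((H₀ + ⋯ + H_r z^r)(1−z) + z^{r+1}/A) = C₀ + (C₁−C₀)z + ⋯ + (1−C_s)z^{s+1} holds with all C_i ∈ ℤ. Then letting d = gcd(a₀,…,a_t), one gets d/A ∈ ℤ, contradicting 0 < d ≤ a₀ < A; hence no such H_i exist. -/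
/-!
Over `ℤ`, let `α = ∑ aᵢ zⁱ` and let `P` be the right-hand side, so `P(1) = 1` by telescoping.
Since `α ∣ P` in `ℚ[z]`, Gauss's lemma gives `primPart α ∣ P` in `ℤ[z]`; hence `(primPart α)(1)` is
a unit and `A = α(1) = cont(α) · (primPart α)(1)` divides `cont(α)`, which divides `a₀ < A`.
-/

open Polynomial

theorem Finset.sum_Icc_one_sub_pred {G : Type*} [AddCommGroup G] (f : ℕ → G) (n : ℕ) :
    ∑ i ∈ Finset.Icc 1 n, (f i - f (i - 1)) = f n - f 0 := by
  induction n with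
  | zero => simp
  | succ n ih => rw [Finset.sum_Icc_succ_top (by omega), ih]; simp

namespace Polynomial

section GCDDomain

variable {R : Type*} [CommRing R] [IsDomain R] [NormalizedGCDMonoid R]
  (K : Type*) [Field K] [Algebra R K] [IsFractionRing R K]

theorem primPart_dvd_of_map_dvd_map {p q : R[X]}
    (h : p.map (algebraMap R K) ∣ q.map (algebraMap R K)) : p.primPart ∣ q := by
  refine (isPrimitive_primPart p).dvd_of_fraction_map_dvd_fraction_map (K := K) (dvd_trans ?_ h)
  conv_rhs => rw [p.eq_C_content_mul_primPart]
  rw [Polynomial.map_mul]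
  exact dvd_mul_left _ _

theorem eval_dvd_content_of_map_dvd_map {p q : R[X]} {x : R}
    (h : p.map (algebraMap R K) ∣ q.map (algebraMap R K)) (hq : q.eval x = 1) :
    p.eval x ∣ p.content := by
  have hunit : IsUnit (p.primPart.eval x) :=
    isUnit_of_dvd_one (hq ▸ eval_dvd (primPart_dvd_of_map_dvd_map K h))
  conv_lhs => rw [p.eq_C_content_mul_primPart, eval_mul, eval_C]
  exact (Units.mul_right_dvd (u := hunit.unit)).2 dvd_rfl

end GCDDomain

theorem eval_one_telescoping {R : Type*} [CommRing R] (s : ℕ) (c : ℕ → R) :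
    (C (c 0) + ∑ i ∈ Finset.Icc 1 s, C (c i - c (i - 1)) * X ^ i + C (1 - c s) * X ^ (s + 1)).eval 1
      = 1 := by
  simp only [eval_add, eval_finsetSum, eval_mul, eval_C, eval_pow, eval_X, one_pow, mul_one,
    Finset.sum_Icc_one_sub_pred]
  ring

end Polynomial

/-- Gauss's-lemma contradiction: with `a₀,…,a_t` nonnegative integers, `t ≥ 1`,
`a₀ > 0`, `a_t > 0`, `A = a₀+⋯+a_t`, there are no rationals `H₀,…,H_r` and
integers `C₀,…,C_s` with
`(a₀+⋯+a_t z^t)·((H₀+⋯+H_r z^r)(1−z) + z^{r+1}/A)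
  = C₀ + (C₁−C₀)z + ⋯ + (C_s−C_{s−1})z^s + (1−C_s)z^{s+1}`. -/
theorem gauss_contradiction (t r s : ℕ) (ht : 1 ≤ t) (a : ℕ → ℕ)
    (ha0 : 0 < a 0) (hat : 0 < a t) (H : ℕ → ℚ) (Cc : ℕ → ℤ)
    (hid :
      (∑ i ∈ Finset.range (t + 1), Polynomial.C ((a i : ℚ)) * X ^ i) *
        ((∑ j ∈ Finset.range (r + 1), Polynomial.C (H j) * X ^ j) * (1 - X) +
          Polynomial.C ((1 : ℚ) / (∑ i ∈ Finset.range (t + 1), a i : ℕ)) *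
            X ^ (r + 1)) =
      Polynomial.C ((Cc 0 : ℚ)) +
        (∑ i ∈ Finset.Icc 1 s, Polynomial.C (((Cc i - Cc (i - 1) : ℤ) : ℚ)) * X ^ i) +
        Polynomial.C (((1 - Cc s : ℤ) : ℚ)) * X ^ (s + 1)) :
    False := by
  set A := ∑ i ∈ Finset.range (t + 1), a i
  set p : ℤ[X] := ∑ i ∈ Finset.range (t + 1), C (a i : ℤ) * X ^ i
  set P : ℤ[X] := C (Cc 0) + ∑ i ∈ Finset.Icc 1 s, C (Cc i - Cc (i - 1)) * X ^ i +
    C (1 - Cc s) * X ^ (s + 1)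
  have hdvd : p.map (algebraMap ℤ ℚ) ∣ P.map (algebraMap ℤ ℚ) :=
    ⟨_, by simpa [p, P, Polynomial.map_sum] using hid.symm⟩
  have hA : (A : ℤ) ∣ p.content := by
    simpa [p, A, eval_finsetSum] using
      eval_dvd_content_of_map_dvd_map ℚ hdvd (eval_one_telescoping s Cc)
  have hA0 : A ∣ a 0 := by
    have h0 : p.content ∣ a 0 := by
      simpa [p, finsetSum_coeff, coeff_X_pow] using p.content_dvd_coeff 0
    exact_mod_cast hA.trans h0
  have hA_gt : a 0 < A := by
    have : a 0 ≤ ∑ i ∈ Finset.range t, a i :=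
      Finset.single_le_sum (fun _ _ => Nat.zero_le _) (Finset.mem_range.2 ht)
    simp only [A, Finset.sum_range_succ]
    omega
  exact absurd (Nat.le_of_dvd ha0 hA0) (not_le.2 hA_gt)
end

section
/- Let A be the Ruzsa set A = { Σᵢ εᵢ 4^i : εᵢ ∈ {0,1} } (base-4 digits in {0,1}) with generating function g(x) = Σ_{a∈A} x^a. Then g(x)·g(x²) = 1/(1−x) in ℂ[[x]], and consequently g(x²)g(x³)g(x⁴)g(x⁶) = 1/((1−x²)(1−x³)). -/
noncomputable section
open Classical

/-- The Ruzsa set: nonnegative integers all of whose base-4 digits are `0`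
or `1`. -/
def ruzsaSet : Set ℕ :=
  {n | ∃ ε : ℕ →₀ ℕ, (∀ i, ε i ≤ 1) ∧ n = ε.sum fun i c => c * 4 ^ i}

/-- The generating function `g(x) = Σ_{a ∈ A} x^a` of the Ruzsa set. -/
def ruzsaGF : PowerSeries ℂ :=
  PowerSeries.mk fun n => if n ∈ ruzsaSet then 1 else 0

/-- Substitution `x ↦ x^a` on power series. -/
def substPow (a : ℕ) (F : PowerSeries ℂ) : PowerSeries ℂ :=
  PowerSeries.mk fun j => if a ∣ j then PowerSeries.coeff (j / a) F else 0

/-! The digit condition says `n ∈ A ↔ n % 4 ≤ 1 ∧ n / 4 ∈ A`, i.e. `g(x) = (1 + x) g(x⁴)`.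
Hence `k(x) = (1 - x) g(x) g(x²)` satisfies
`k(x) = (1 - x)(1 + x)(1 + x²) g(x⁴) g(x⁸) = k(x⁴)`, and a power series invariant under
`x ↦ x⁴` is constant, here `k(0) = 1`. The second identity is the first one at `x²` times the
first one at `x³`. -/

open PowerSeries

/-- A digit vector `ε : ℕ →₀ ℕ` is literally the coefficient function of a polynomial over `ℕ`,
and `ε.sum fun i c => c * 4 ^ i` is its value at `4`. -/
theorem mem_ruzsaSet_iff_exists_polynomial {n : ℕ} :
    n ∈ ruzsaSet ↔ ∃ p : Polynomial ℕ, (∀ i, p.coeff i ≤ 1) ∧ p.eval 4 = n := by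
  constructor
  · rintro ⟨ε, hε, rfl⟩
    exact ⟨.ofFinsupp (.ofCoeff ε), hε, by rw [Polynomial.eval_eq_sum]; rfl⟩
  · rintro ⟨p, hp, rfl⟩
    exact ⟨p.toFinsupp.coeff, hp, by rw [Polynomial.eval_eq_sum]; rfl⟩

theorem mem_ruzsaSet_iff_mod_four {n : ℕ} :
    n ∈ ruzsaSet ↔ n % 4 ≤ 1 ∧ n / 4 ∈ ruzsaSet := by
  simp only [mem_ruzsaSet_iff_exists_polynomial]
  constructor
  · rintro ⟨p, hp, rfl⟩
    have h : p.eval 4 = p.coeff 0 + 4 * p.divX.eval 4 := by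
      conv_lhs => rw [← Polynomial.divX_mul_X_add p]
      simp only [Polynomial.eval_add, Polynomial.eval_mul, Polynomial.eval_X, Polynomial.eval_C]
      ring
    have h0 := hp 0
    exact ⟨by omega, p.divX, fun i => by simpa [Polynomial.coeff_divX] using hp (i + 1),
      by omega⟩
  · rintro ⟨hn, p, hp, hpn⟩
    refine ⟨.C (n % 4) + .X * p, fun i => ?_, by simp [hpn]; omega⟩
    cases i <;> simp [Polynomial.coeff_X_mul, hn, hp]

theorem constantCoeff_ruzsaGF : constantCoeff ruzsaGF = 1 := by
  rw [← coeff_zero_eq_constantCoeff_apply, ruzsaGF, coeff_mk, if_pos ⟨0, by simp, by simp⟩]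

theorem substPow_eq_expand {a : ℕ} (ha : a ≠ 0) (F : PowerSeries ℂ) :
    substPow a F = expand a ha F := by
  ext j
  simp [substPow, coeff_expand]

theorem ruzsaGF_eq_one_add_X_mul_expand :
    ruzsaGF = (1 + X) * expand 4 four_ne_zero ruzsaGF := by
  ext n
  rw [add_mul, one_mul, map_add]
  rcases n with _ | m
  · simp
  rw [coeff_succ_X_mul]
  simp only [ruzsaGF, coeff_mk, coeff_expand]
  obtain ⟨q, r, hr, rfl⟩ : ∃ q r, r < 4 ∧ m = 4 * q + r :=
    ⟨m / 4, m % 4, by omega, by omega⟩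
  rw [mem_ruzsaSet_iff_mod_four]
  interval_cases r <;> simp [Nat.dvd_iff_mod_eq_zero, Nat.add_assoc, Nat.mul_add_div]

theorem eq_C_constantCoeff_of_expand_eq {R : Type*} [CommRing R] {a : ℕ} (ha : 1 < a)
    {F : PowerSeries R} (hF : expand a (by omega) F = F) : F = C (constantCoeff F) := by
  ext n
  induction n using Nat.strong_induction_on with
  | _ n ih =>
  rcases n.eq_zero_or_pos with rfl | hn
  · simp
  conv_lhs => rw [← hF]
  rw [coeff_expand, coeff_C, if_neg hn.ne']
  split_ifs with hdvd
  · rw [ih (n / a) (Nat.div_lt_self hn ha), coeff_C,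
      if_neg (Nat.div_pos (Nat.le_of_dvd hn hdvd) (by omega)).ne']
  · rfl

theorem expand_two_ruzsaGF :
    expand 2 two_ne_zero ruzsaGF = (1 + X ^ 2) * expand 8 (by norm_num) ruzsaGF := by
  conv_lhs => rw [ruzsaGF_eq_one_add_X_mul_expand]
  rw [map_mul, map_add, map_one, expand_X, ← expand_mul]

theorem ruzsaGF_mul_expand_two_mul_one_sub_X :
    ruzsaGF * expand 2 two_ne_zero ruzsaGF * (1 - X) = 1 := by
  set k := ruzsaGF * expand 2 two_ne_zero ruzsaGF * (1 - X)
  have hk : expand 4 four_ne_zero k = k :=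
    calc expand 4 four_ne_zero k
        = expand 4 four_ne_zero ruzsaGF * expand 8 (by norm_num) ruzsaGF * (1 - X ^ 4) := by
          rw [map_mul, map_mul, map_sub, map_one, expand_X, ← expand_mul]
      _ = ((1 + X) * expand 4 four_ne_zero ruzsaGF) *
            ((1 + X ^ 2) * expand 8 (by norm_num) ruzsaGF) * (1 - X) := by ring
      _ = k := by rw [← ruzsaGF_eq_one_add_X_mul_expand, ← expand_two_ruzsaGF]
  have hk0 : constantCoeff k = 1 := by
    simp [k, constantCoeff_ruzsaGF]
  rw [eq_C_constantCoeff_of_expand_eq (by norm_num) hk, hk0, map_one]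

theorem expand_ruzsaGF_mul_expand_mul_one_sub_X_pow {a : ℕ} (ha : a ≠ 0) :
    expand a ha ruzsaGF * expand (a * 2) (mul_ne_zero ha two_ne_zero) ruzsaGF * (1 - X ^ a) =
      1 := by
  have h := congrArg (expand a ha) ruzsaGF_mul_expand_two_mul_one_sub_X
  rwa [map_mul, map_mul, map_sub, map_one, expand_X, ← expand_mul] at h

/-- For the Ruzsa set, `g(x)·g(x²) = 1/(1−x)` and consequently
`g(x²)g(x³)g(x⁴)g(x⁶) = 1/((1−x²)(1−x³))` in `ℂ[[x]]` (the identities are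
stated multiplied through by the denominators). -/
theorem ruzsa_generating_function :
    ruzsaGF * substPow 2 ruzsaGF * (1 - PowerSeries.X) = 1 ∧
    substPow 2 ruzsaGF * substPow 3 ruzsaGF * substPow 4 ruzsaGF *
        substPow 6 ruzsaGF *
        ((1 - PowerSeries.X ^ 2) * (1 - PowerSeries.X ^ 3)) = 1 := by
  simp only [substPow_eq_expand two_ne_zero, substPow_eq_expand three_ne_zero,
    substPow_eq_expand four_ne_zero, substPow_eq_expand (by norm_num : 6 ≠ 0)]
  refine ⟨ruzsaGF_mul_expand_two_mul_one_sub_X, ?_⟩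
  calc _ = (expand 2 two_ne_zero ruzsaGF * expand (2 * 2) (by norm_num) ruzsaGF *
          (1 - X ^ 2)) * (expand 3 three_ne_zero ruzsaGF * expand (3 * 2) (by norm_num) ruzsaGF *
          (1 - X ^ 3)) := by ring
    _ = 1 := by
      rw [expand_ruzsaGF_mul_expand_mul_one_sub_X_pow,
        expand_ruzsaGF_mul_expand_mul_one_sub_X_pow, one_mul]
end
end
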